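/- Let A : (-∞,0] → End(V) be continuous on a finite-dimensional normed vector space V, with sup_{t≤0}‖A(t)-A₀‖ < ∞. Suppose ε > 0, A₀ ∈ End(V), and t₀ ≤ 0 are such that ‖A(t) - A₀‖ < (ε/2)/M(A₀, ε/2) for all t ≤ t₀, where M(A₀,δ) := sup_{t≤0}‖exp(t(A₀ - ℓ(A₀) + δ))‖ and ℓ(A₀) is the minimal real part of the spectrum of A₀. Then the solution E of E'(t)=A(t)E(t), E(0)=id satisfies ‖E(t)‖ ≤ C · exp(t(ℓ(A₀) - ε)) for all t ≤ 0, with C = M(A₀,ε/2)·M(A₀,ε)·exp(-t₀·M(A₀,ε)·sup_{t≤0}‖A(t)-A₀‖). -/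

import Mathlib

/-!
Write `E' = A₀ E + (A - A₀) E`. Variation of constants gives
`E r = exp ((r - t₁) A₀) E t₁ - ∫_r^{t₁} exp ((r - s) A₀) (A s - A₀) E s ds`, and a bound
`‖exp (τ A₀)‖ ≤ M e^{τ ω}` for `τ ≤ 0` (this is what `M(A₀, δ)` provides, with `ω = ℓ - δ`) turns it
into an integral inequality for `‖E s‖ e^{-s ω}`. Backward Grönwall then gives
`‖E t‖ ≤ M ‖E t₁‖ e^{c (t₁ - t)} e^{(t - t₁) ω}` whenever `M ‖A - A₀‖ ≤ c` on `[t, t₁]`.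
On `[t₀, 0]` this is used with `δ = ε` and `c = M(A₀, ε) K`; below `t₀` with `δ = ε / 2` and
`c = ε / 2`, where the Grönwall growth `e^{ε (t₀ - t) / 2}` is exactly the gap between the rates
`ℓ - ε / 2` and `ℓ - ε`.
-/

open NormedSpace Set intervalIntegral MeasureTheory

theorem le_mul_exp_of_neg_mul_le_deriv {f f' : ℝ → ℝ} {a b K : ℝ}
    (hf : ContinuousOn f (Icc a b)) (hf' : ∀ x ∈ Ioo a b, HasDerivAt f (f' x) x)
    (hbound : ∀ x ∈ Ioo a b, -(K * f x) ≤ f' x) :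
    ∀ t ∈ Icc a b, f t ≤ f b * Real.exp (K * (b - t)) := by
  set g : ℝ → ℝ := fun x => f x * Real.exp (K * x)
  have hmono : MonotoneOn g (Icc a b) := by
    refine monotoneOn_of_hasDerivWithinAt_nonneg (convex_Icc a b) (hf.mul (by fun_prop))
      (f' := fun x => (f' x + K * f x) * Real.exp (K * x)) (fun x hx => ?_) (fun x hx => ?_)
    · rw [interior_Icc] at hx
      exact (((hf' x hx).fun_mul ((hasDerivAt_id x).const_mul K).exp).congr_deriv
        (by simp only [id, mul_one]; ring)).hasDerivWithinAt
    · rw [interior_Icc] at hx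
      exact mul_nonneg (by linarith [hbound x hx]) (Real.exp_pos _).le
  intro t ht
  have hgt : g t ≤ g b := hmono ht ⟨ht.1.trans ht.2, le_rfl⟩ ht.2
  calc f t = g t * Real.exp (-(K * t)) := by simp only [g, mul_assoc, ← Real.exp_add]; simp
    _ ≤ g b * Real.exp (-(K * t)) := by gcongr
    _ = f b * Real.exp (K * (b - t)) := by
      simp only [g, mul_assoc, ← Real.exp_add]; ring_nf

theorem le_mul_exp_of_le_add_mul_integral {u : ℝ → ℝ} {a b B K : ℝ}
    (hu : ContinuousOn u (Icc a b)) (hK : 0 ≤ K)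
    (h : ∀ t ∈ Icc a b, u t ≤ B + K * ∫ s in t..b, u s) :
    ∀ t ∈ Icc a b, u t ≤ B * Real.exp (K * (b - t)) := by
  intro t ht
  have hab : a ≤ b := ht.1.trans ht.2
  set Ψ : ℝ → ℝ := fun x => B + K * ∫ s in x..b, u s
  have hΨ : ContinuousOn Ψ (Icc a b) := by
    have := continuousOn_primitive_interval_left (μ := volume) (f := u) (a := a) (b := b)
      (by rw [uIcc_of_le hab]; exact hu.integrableOn_Icc)
    rw [uIcc_of_le hab] at this
    exact continuousOn_const.add (continuousOn_const.mul this)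
  have hΨ' : ∀ x ∈ Ioo a b, HasDerivAt Ψ (-(K * u x)) x := by
    intro x hx
    have hint : IntervalIntegrable u volume x b :=
      (hu.mono (Icc_subset_Icc hx.1.le le_rfl)).intervalIntegrable_of_Icc hx.2.le
    have := integral_hasDerivAt_left hint
      ((hu.mono Ioo_subset_Icc_self).stronglyMeasurableAtFilter isOpen_Ioo x hx)
      (hu.continuousAt (Icc_mem_nhds hx.1 hx.2))
    exact ((this.const_mul K).const_add B).congr_deriv (by ring)
  calc u t ≤ Ψ t := h t ht
    _ ≤ Ψ b * Real.exp (K * (b - t)) :=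
      le_mul_exp_of_neg_mul_le_deriv hΨ hΨ'
        (fun x hx => neg_le_neg (mul_le_mul_of_nonneg_left (h x (Ioo_subset_Icc_self hx)) hK))
        t ht
    _ = B * Real.exp (K * (b - t)) := by simp [Ψ]

section BanachAlgebra

variable {𝔸 : Type*} [NormedRing 𝔸] [NormedAlgebra ℝ 𝔸] [CompleteSpace 𝔸]

theorem norm_exp_smul_add_smul_one (a : 𝔸) (τ r : ℝ) :
    ‖exp (τ • (a + r • (1 : 𝔸)))‖ = Real.exp (τ * r) * ‖exp (τ • a)‖ := by
  let : NormedAlgebra ℚ 𝔸 := NormedAlgebra.restrictScalars ℚ ℝ 𝔸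
  have hsplit : τ • (a + r • (1 : 𝔸)) = τ • a + algebraMap ℝ 𝔸 (τ * r) := by
    rw [Algebra.algebraMap_eq_smul_one, smul_add, smul_smul]
  rw [hsplit, exp_add_of_commute (Algebra.commutes _ _).symm, ← algebraMap_exp_comm,
    ← Real.exp_eq_exp_ℝ, ← Algebra.commutes, ← Algebra.smul_def, norm_smul,
    Real.norm_of_nonneg (Real.exp_pos _).le]

theorem norm_exp_smul_le_of_norm_exp_smul_add_smul_one_le {a : 𝔸} {τ r M : ℝ}
    (h : ‖exp (τ • (a + r • (1 : 𝔸)))‖ ≤ M) : ‖exp (τ • a)‖ ≤ M * Real.exp (τ * -r) := by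
  rw [norm_exp_smul_add_smul_one] at h
  rw [mul_neg, Real.exp_neg, ← div_eq_mul_inv, le_div_iff₀ (Real.exp_pos _), mul_comm]
  exact h

theorem eq_exp_smul_mul_sub_integral {A E : ℝ → 𝔸} (A₀ : 𝔸) {r t₁ : ℝ} (hrt : r ≤ t₁)
    (hA : ContinuousOn A (Icc r t₁)) (hE : ∀ s ∈ Icc r t₁, HasDerivAt E (A s * E s) s) :
    E r = exp ((r - t₁) • A₀) * E t₁ -
      ∫ s in r..t₁, exp ((r - s) • A₀) * ((A s - A₀) * E s) := by
  have hexp : ∀ s, HasDerivAt (fun s => exp ((r - s) • A₀)) (-(exp ((r - s) • A₀) * A₀)) s :=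
    fun s => by
      simpa [Function.comp_def] using
        (hasDerivAt_exp_smul_const A₀ (r - s)).scomp s ((hasDerivAt_id s).const_sub r)
  have hderiv : ∀ s ∈ uIcc r t₁, HasDerivAt (fun s => exp ((r - s) • A₀) * E s)
      (exp ((r - s) • A₀) * ((A s - A₀) * E s)) s := by
    intro s hs
    rw [uIcc_of_le hrt] at hs
    exact ((hexp s).mul (hE s hs)).congr_deriv (by noncomm_ring)
  have hcont : ContinuousOn (fun s => exp ((r - s) • A₀) * ((A s - A₀) * E s)) (uIcc r t₁) := by
    rw [uIcc_of_le hrt]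
    exact (continuous_iff_continuousAt.2 fun s => (hexp s).continuousAt).continuousOn.mul
      ((hA.sub continuousOn_const).mul fun s hs => (hE s hs).continuousAt.continuousWithinAt)
  rw [integral_eq_sub_of_hasDerivAt hderiv hcont.intervalIntegrable]
  simp

theorem norm_mul_exp_le_add_integral {A E : ℝ → 𝔸} (A₀ : 𝔸) {r t₁ ω M c : ℝ} (hrt : r ≤ t₁)
    (hA : ContinuousOn A (Icc r t₁)) (hE : ∀ s ∈ Icc r t₁, HasDerivAt E (A s * E s) s)
    (hexp : ∀ τ ≤ 0, ‖exp (τ • A₀)‖ ≤ M * Real.exp (τ * ω))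
    (hc : ∀ s ∈ Icc r t₁, M * ‖A s - A₀‖ ≤ c) :
    ‖E r‖ * Real.exp (-(r * ω)) ≤
      M * (‖E t₁‖ * Real.exp (-(t₁ * ω))) + c * ∫ s in r..t₁, ‖E s‖ * Real.exp (-(s * ω)) := by
  set w : ℝ → ℝ := fun s => ‖E s‖ * Real.exp (-(s * ω))
  have hEcont : ContinuousOn E (Icc r t₁) := fun s hs => (hE s hs).continuousAt.continuousWithinAt
  have hw : IntervalIntegrable w volume r t₁ :=
    (hEcont.norm.mul (by fun_prop)).intervalIntegrable_of_Icc hrt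
  have hfirst : ‖exp ((r - t₁) • A₀) * E t₁‖ ≤ Real.exp (r * ω) * (M * w t₁) :=
    calc ‖exp ((r - t₁) • A₀) * E t₁‖ ≤ M * Real.exp ((r - t₁) * ω) * ‖E t₁‖ :=
          (norm_mul_le _ _).trans (by gcongr; exact hexp _ (by linarith))
      _ = Real.exp (r * ω) * (M * w t₁) := by
          simp only [w, sub_mul, Real.exp_sub, Real.exp_neg]; ring
  have hpoint : ∀ s ∈ Ioc r t₁,
      ‖exp ((r - s) • A₀) * ((A s - A₀) * E s)‖ ≤ Real.exp (r * ω) * (c * w s) := by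
    intro s hs
    calc ‖exp ((r - s) • A₀) * ((A s - A₀) * E s)‖
        ≤ M * Real.exp ((r - s) * ω) * (‖A s - A₀‖ * ‖E s‖) :=
          (norm_mul_le _ _).trans (mul_le_mul (hexp _ (by linarith [hs.1])) (norm_mul_le _ _)
            (norm_nonneg _) ((norm_nonneg _).trans (hexp _ (by linarith [hs.1]))))
      _ = Real.exp (r * ω) * ((M * ‖A s - A₀‖) * w s) := by
          simp only [w, sub_mul, Real.exp_sub, Real.exp_neg]; ring
      _ ≤ Real.exp (r * ω) * (c * w s) := by
          gcongr
          exact hc s (Ioc_subset_Icc_self hs)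
  have hsecond : ‖∫ s in r..t₁, exp ((r - s) • A₀) * ((A s - A₀) * E s)‖ ≤
      Real.exp (r * ω) * (c * ∫ s in r..t₁, w s) := by
    rw [← intervalIntegral.integral_const_mul, ← intervalIntegral.integral_const_mul]
    exact norm_integral_le_of_norm_le hrt (ae_of_all _ hpoint) ((hw.const_mul c).const_mul _)
  have hEr : ‖E r‖ ≤ Real.exp (r * ω) * (M * w t₁ + c * ∫ s in r..t₁, w s) := by
    rw [eq_exp_smul_mul_sub_integral A₀ hrt hA hE, mul_add]
    exact (norm_sub_le _ _).trans (add_le_add hfirst hsecond)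
  calc w r ≤ Real.exp (r * ω) * (M * w t₁ + c * ∫ s in r..t₁, w s) * Real.exp (-(r * ω)) :=
        mul_le_mul_of_nonneg_right hEr (Real.exp_pos _).le
    _ = M * w t₁ + c * ∫ s in r..t₁, w s := by
        rw [mul_comm, ← mul_assoc, ← Real.exp_add, neg_add_cancel, Real.exp_zero, one_mul]

theorem norm_le_of_norm_exp_smul_le {A E : ℝ → 𝔸} (A₀ : 𝔸) {t t₁ ω M c : ℝ} (htt₁ : t ≤ t₁)
    (hA : ContinuousOn A (Icc t t₁)) (hE : ∀ s ∈ Icc t t₁, HasDerivAt E (A s * E s) s)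
    (hexp : ∀ τ ≤ 0, ‖exp (τ • A₀)‖ ≤ M * Real.exp (τ * ω))
    (hc : ∀ s ∈ Icc t t₁, M * ‖A s - A₀‖ ≤ c) :
    ‖E t‖ ≤ M * ‖E t₁‖ * Real.exp (c * (t₁ - t)) * Real.exp ((t - t₁) * ω) := by
  have hM : 0 ≤ M := by simpa using (norm_nonneg _).trans (hexp 0 le_rfl)
  have hc0 : 0 ≤ c := (mul_nonneg hM (norm_nonneg _)).trans (hc t ⟨le_rfl, htt₁⟩)
  have hw : ContinuousOn (fun s => ‖E s‖ * Real.exp (-(s * ω))) (Icc t t₁) :=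
    (ContinuousOn.norm fun s hs => (hE s hs).continuousAt.continuousWithinAt).mul (by fun_prop)
  have hgronwall := le_mul_exp_of_le_add_mul_integral hw hc0 (fun r hr =>
    norm_mul_exp_le_add_integral A₀ hr.2 (hA.mono (Icc_subset_Icc_left hr.1))
      (fun s hs => hE s (Icc_subset_Icc_left hr.1 hs)) hexp
      (fun s hs => hc s (Icc_subset_Icc_left hr.1 hs))) t ⟨le_rfl, htt₁⟩
  calc ‖E t‖ = ‖E t‖ * Real.exp (-(t * ω)) * Real.exp (t * ω) := by
        rw [mul_assoc, ← Real.exp_add, neg_add_cancel, Real.exp_zero, mul_one]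
    _ ≤ M * (‖E t₁‖ * Real.exp (-(t₁ * ω))) * Real.exp (c * (t₁ - t)) * Real.exp (t * ω) := by
        gcongr
    _ = M * ‖E t₁‖ * Real.exp (c * (t₁ - t)) * Real.exp ((t - t₁) * ω) := by
        rw [show (t - t₁) * ω = t * ω + -(t₁ * ω) by ring, Real.exp_add]; ring

theorem norm_le_mul_exp_of_tail_near [NormOneClass 𝔸] {A E : ℝ → 𝔸} (A₀ : 𝔸)
    {ω ε K t₀ M₁ M₂ : ℝ} (hA : ContinuousOn A (Iic 0)) (hE0 : E 0 = 1)
    (hE : ∀ t ≤ 0, HasDerivAt E (A t * E t) t) (ht₀ : t₀ ≤ 0)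
    (hM₁ : ∀ τ ≤ 0, ‖exp (τ • A₀)‖ ≤ M₁ * Real.exp (τ * (ω - ε)))
    (hM₂ : ∀ τ ≤ 0, ‖exp (τ • A₀)‖ ≤ M₂ * Real.exp (τ * (ω - ε / 2)))
    (hK : ∀ s ≤ 0, ‖A s - A₀‖ ≤ K) (hnear : ∀ s ≤ t₀, M₂ * ‖A s - A₀‖ ≤ ε / 2) :
    ∀ t ≤ 0, ‖E t‖ ≤ M₂ * M₁ * Real.exp (-t₀ * M₁ * K) * Real.exp (t * (ω - ε)) := by
  have hM₁1 : 1 ≤ M₁ := by simpa using hM₁ 0 le_rfl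
  have hM₂1 : 1 ≤ M₂ := by simpa using hM₂ 0 le_rfl
  have hK0 : 0 ≤ K := (norm_nonneg _).trans (hK 0 le_rfl)
  have hE_head : ∀ t ∈ Icc t₀ 0,
      ‖E t‖ ≤ M₁ * Real.exp (-t₀ * M₁ * K) * Real.exp (t * (ω - ε)) := by
    intro t ht
    have := norm_le_of_norm_exp_smul_le A₀ ht.2 (hA.mono Icc_subset_Iic_self)
      (fun s hs => hE s hs.2) hM₁ (c := M₁ * K)
      (fun s hs => mul_le_mul_of_nonneg_left (hK s hs.2) (by linarith))
    rw [hE0, norm_one, mul_one, sub_zero] at this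
    refine this.trans (mul_le_mul_of_nonneg_right (mul_le_mul_of_nonneg_left
      (Real.exp_le_exp.2 ?_) (by linarith)) (Real.exp_pos _).le)
    nlinarith [ht.1, mul_nonneg (by linarith : (0:ℝ) ≤ M₁) hK0]
  intro t ht
  rcases le_total t₀ t with htt₀ | htt₀
  · calc ‖E t‖ ≤ M₁ * Real.exp (-t₀ * M₁ * K) * Real.exp (t * (ω - ε)) := hE_head t ⟨htt₀, ht⟩
      _ ≤ M₂ * (M₁ * Real.exp (-t₀ * M₁ * K) * Real.exp (t * (ω - ε))) :=
        le_mul_of_one_le_left (by positivity) hM₂1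
      _ = M₂ * M₁ * Real.exp (-t₀ * M₁ * K) * Real.exp (t * (ω - ε)) := by ring
  · calc ‖E t‖ ≤ M₂ * ‖E t₀‖ * Real.exp (ε / 2 * (t₀ - t)) * Real.exp ((t - t₀) * (ω - ε / 2)) :=
          norm_le_of_norm_exp_smul_le A₀ htt₀ (hA.mono fun s hs => hs.2.trans ht₀)
            (fun s hs => hE s (hs.2.trans ht₀)) hM₂ (fun s hs => hnear s hs.2)
      _ ≤ M₂ * (M₁ * Real.exp (-t₀ * M₁ * K) * Real.exp (t₀ * (ω - ε))) *
          Real.exp (ε / 2 * (t₀ - t)) * Real.exp ((t - t₀) * (ω - ε / 2)) := by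
        gcongr
        exact hE_head t₀ ⟨le_rfl, ht₀⟩
      _ = M₂ * M₁ * Real.exp (-t₀ * M₁ * K) * Real.exp (t * (ω - ε)) := by
        rw [show t * (ω - ε) = t₀ * (ω - ε) + ε / 2 * (t₀ - t) + (t - t₀) * (ω - ε / 2) by ring,
          Real.exp_add, Real.exp_add]
        ring

end BanachAlgebra

theorem stmt3_general {V : Type*} [NormedAddCommGroup V] [NormedSpace ℂ V]
    [FiniteDimensional ℂ V] (A₀ : V →L[ℂ] V)
    (A : ℝ → (V →L[ℂ] V)) (hA : ContinuousOn A (Set.Iic 0))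
    (E : ℝ → (V →L[ℂ] V)) (hE0 : E 0 = 1)
    (hE : ∀ t ≤ (0:ℝ), HasDerivAt E (A t * E t) t)
    (ℓ : ℝ)
    (ε : ℝ) (hε : 0 < ε)
    (M : ℝ → ℝ)
    (hMbdd : ∀ δ : ℝ, 0 < δ → BddAbove ((fun t : ℝ =>
      ‖NormedSpace.exp (t • (A₀ - (ℓ : ℂ) • (1 : V →L[ℂ] V) + (δ : ℂ) • (1 : V →L[ℂ] V)))‖)
        '' Set.Iic 0))
    (hM : ∀ δ : ℝ, M δ = sSup ((fun t : ℝ =>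
      ‖NormedSpace.exp (t • (A₀ - (ℓ : ℂ) • (1 : V →L[ℂ] V) + (δ : ℂ) • (1 : V →L[ℂ] V)))‖)
        '' Set.Iic 0))
    (K : ℝ)
    (hKbdd : BddAbove ((fun s : ℝ => ‖A s - A₀‖) '' Set.Iic 0))
    (hK : K = sSup ((fun s : ℝ => ‖A s - A₀‖) '' Set.Iic 0))
    (t₀ : ℝ) (ht₀ : t₀ ≤ 0)
    (hnear : ∀ t ≤ t₀, ‖A t - A₀‖ < (ε / 2) / M (ε / 2))
    (C : ℝ) (hC : C = M (ε / 2) * M ε * Real.exp (-t₀ * M ε * K)) :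
    ∀ t ≤ (0:ℝ), ‖E t‖ ≤ C * Real.exp (t * (ℓ - ε)) := by
  have hexp : ∀ δ, 0 < δ → ∀ τ ≤ 0, ‖exp (τ • A₀)‖ ≤ M δ * Real.exp (τ * (ℓ - δ)) := by
    intro δ hδ τ hτ
    have hshift : A₀ - (ℓ : ℂ) • (1 : V →L[ℂ] V) + (δ : ℂ) • 1 = A₀ + (δ - ℓ) • 1 := by
      rw [Complex.coe_smul, Complex.coe_smul, sub_smul]; abel
    have := le_csSup (hMbdd δ hδ) ⟨τ, hτ, rfl⟩
    rw [← hM, hshift] at this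
    simpa using norm_exp_smul_le_of_norm_exp_smul_add_smul_one_le this
  have hMpos : 0 < M (ε / 2) :=
    (div_pos_iff_of_pos_left (half_pos hε)).1 ((norm_nonneg _).trans_lt (hnear t₀ le_rfl))
  rcases subsingleton_or_nontrivial V with hV | hV
  · intro t _
    have : 0 ≤ M ε := by simpa using (norm_nonneg _).trans (hexp ε hε 0 le_rfl)
    rw [Subsingleton.elim (E t) 0, norm_zero, hC]
    positivity
  rw [hC]
  exact norm_le_mul_exp_of_tail_near A₀ hA hE0 hE ht₀ (hexp ε hε) (hexp (ε / 2) (half_pos hε))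
    (fun s hs => hK ▸ le_csSup hKbdd ⟨s, hs, rfl⟩)
    (fun s hs => (mul_le_mul_of_nonneg_left (hnear s hs).le hMpos.le).trans_eq
      (mul_div_cancel₀ _ hMpos.ne'))

/-- If `‖A(t)-A₀‖ < (ε/2)/M(A₀,ε/2)` for all `t ≤ t₀`, then the solution of
`E'(t) = A(t)E(t)`, `E(0)=id` satisfies `‖E(t)‖ ≤ C·exp(t(ℓ(A₀)-ε))` for all `t ≤ 0`,
with `C = M(A₀,ε/2)·M(A₀,ε)·exp(-t₀·M(A₀,ε)·sup_{t≤0}‖A(t)-A₀‖)`, where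
`M(A₀,δ) = sup_{t≤0}‖exp(t(A₀-ℓ(A₀)+δ))‖` and `ℓ(A₀)` is the minimal real part of
the spectrum of `A₀`. -/
theorem stmt3 {V : Type*} [NormedAddCommGroup V] [NormedSpace ℂ V]
    [FiniteDimensional ℂ V] (A₀ : V →L[ℂ] V)
    (A : ℝ → (V →L[ℂ] V)) (hA : ContinuousOn A (Set.Iic 0))
    (E : ℝ → (V →L[ℂ] V)) (hE0 : E 0 = 1)
    (hE : ∀ t ≤ (0:ℝ), HasDerivAt E (A t * E t) t)
    (ℓ : ℝ) (hℓ : ℓ = sInf (Complex.re '' spectrum ℂ A₀))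
    (ε : ℝ) (hε : 0 < ε)
    (M : ℝ → ℝ)
    (hMbdd : ∀ δ : ℝ, 0 < δ → BddAbove ((fun t : ℝ =>
      ‖NormedSpace.exp (t • (A₀ - (ℓ : ℂ) • (1 : V →L[ℂ] V) + (δ : ℂ) • (1 : V →L[ℂ] V)))‖)
        '' Set.Iic 0))
    (hM : ∀ δ : ℝ, M δ = sSup ((fun t : ℝ =>
      ‖NormedSpace.exp (t • (A₀ - (ℓ : ℂ) • (1 : V →L[ℂ] V) + (δ : ℂ) • (1 : V →L[ℂ] V)))‖)
        '' Set.Iic 0))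
    (K : ℝ)
    (hKbdd : BddAbove ((fun s : ℝ => ‖A s - A₀‖) '' Set.Iic 0))
    (hK : K = sSup ((fun s : ℝ => ‖A s - A₀‖) '' Set.Iic 0))
    (t₀ : ℝ) (ht₀ : t₀ ≤ 0)
    (hnear : ∀ t ≤ t₀, ‖A t - A₀‖ < (ε / 2) / M (ε / 2))
    (C : ℝ) (hC : C = M (ε / 2) * M ε * Real.exp (-t₀ * M ε * K)) :
    ∀ t ≤ (0:ℝ), ‖E t‖ ≤ C * Real.exp (t * (ℓ - ε)) :=
  stmt3_general A₀ A hA E hE0 hE ℓ ε hε M hMbdd hM K hKbdd hK t₀ ht₀ hnear C hC
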